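/- arXiv:math/0603417 — 4 statements merged into one kernel-verified Lean document; each statement's English description precedes it below -/
import Mathlib

section
/- Let z : 𝔻 → (M,J) be a J-holomorphic disc with z(0) = p and dz(0)(e₁) = t, where e₁ = ∂/∂(Re ζ). Then for any C² real function r near p, the Levi form satisfies L^J_r(p; t) = Δ(r ∘ z)(0), the Laplacian of the pullback at the origin. -/
/-- The Levi form of a C² real function `r` on an almost complex manifold `(E,J)` (in a chart):
`L^J_r(p;t) = -d(J^*dr)(t, J p t)(p)`. -/
noncomputable def leviForm {E : Type*} [NormedAddCommGroup E] [NormedSpace ℝ E]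
    (J : E → (E →L[ℝ] E)) (r : E → ℝ) (p : E) (t : E) : ℝ :=
  ((fderiv ℝ (fun q => (fderiv ℝ r q).comp (J q)) p) (J p t)) t
    - ((fderiv ℝ (fun q => (fderiv ℝ r q).comp (J q)) p) t) (J p t)

/- STATEMENT 5: if `z : 𝔻 → (M,J)` is a J-holomorphic disc (`dz ∘ J_st = J ∘ dz` on the unit
disc) with `z(0) = p`, `dz(0)(e₁) = t`, then `L^J_r(p;t) = Δ(r∘z)(0)`, the Laplacian of the
pullback at the origin (`e₁ = ∂/∂(Re ζ) = 1 ∈ ℂ`, and `Δu(0) = ∂²u/∂x²(0) + ∂²u/∂y²(0)`). -/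
theorem stmt5 {E : Type*} [NormedAddCommGroup E] [NormedSpace ℝ E]
    (J : E → (E →L[ℝ] E)) (hJs : ContDiff ℝ (⊤ : ℕ∞) J)
    (hJ2 : ∀ q v, J q (J q v) = -v)
    (z : ℂ → E) (hz : ContDiff ℝ (⊤ : ℕ∞) z)
    (hzhol : ∀ ζ ∈ Metric.ball (0 : ℂ) 1, ∀ w : ℂ,
      fderiv ℝ z ζ (Complex.I * w) = J (z ζ) (fderiv ℝ z ζ w))
    (p : E) (t : E) (hz0 : z 0 = p) (ht : fderiv ℝ z 0 1 = t)
    (r : E → ℝ) (hr : ContDiff ℝ 2 r) :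
    leviForm J r p t
      = fderiv ℝ (fun ζ => fderiv ℝ (r ∘ z) ζ 1) 0 1
        + fderiv ℝ (fun ζ => fderiv ℝ (r ∘ z) ζ Complex.I) 0 Complex.I := by
  -- differentiability facts
  have hzd : Differentiable ℝ z := hz.differentiable (by simp)
  have ha : ContDiff ℝ (⊤ : ℕ∞) (fderiv ℝ z) := hz.fderiv_right (by exact_mod_cast le_top)
  have had : Differentiable ℝ (fderiv ℝ z) := ha.differentiable (by simp)
  have hJd : Differentiable ℝ J := hJs.differentiable (by simp)
  have hrd : Differentiable ℝ r := hr.differentiable (by norm_num)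
  have hdr : ContDiff ℝ 1 (fderiv ℝ r) := hr.fderiv_right (by norm_num)
  have hdrd : Differentiable ℝ (fderiv ℝ r) := hdr.differentiable one_ne_zero
  set A2 : ℂ →L[ℝ] ℂ →L[ℝ] E := fderiv ℝ (fderiv ℝ z) 0 with hA2
  set B : E →L[ℝ] E →L[ℝ] ℝ := fderiv ℝ (fderiv ℝ r) p with hB
  set K : E →L[ℝ] E →L[ℝ] E := fderiv ℝ J p with hK
  set dr : E →L[ℝ] ℝ := fderiv ℝ r p with hdrp
  -- applying second derivative of z
  have happ : ∀ w v : ℂ, fderiv ℝ (fun ζ => fderiv ℝ z ζ v) 0 w = A2 w v := by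
    intro w v
    rw [fderiv_clm_apply (had 0) (differentiableAt_const v)]
    simp [hA2]
  -- symmetry of second derivative
  have hsym : A2 1 Complex.I = A2 Complex.I 1 :=
    (hz.contDiffAt.isSymmSndFDerivAt
      (by rw [minSmoothness_of_isRCLikeNormedField, ← WithTop.coe_ofNat]; exact WithTop.coe_le_coe.mpr le_top)) 1 Complex.I
  -- holomorphy as an eventual equality
  have hball : (fun ζ => fderiv ℝ z ζ Complex.I) =ᶠ[nhds (0 : ℂ)]
      fun ζ => J (z ζ) (fderiv ℝ z ζ 1) := by
    filter_upwards [Metric.isOpen_ball.mem_nhds (by simp : (0:ℂ) ∈ Metric.ball (0:ℂ) 1)]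
      with ζ hζ
    simpa using hzhol ζ hζ 1
  have hb0 : fderiv ℝ z 0 Complex.I = J p t := by
    have := hzhol 0 (by simp) 1
    simpa [hz0, ht] using this
  -- derivative of J ∘ z
  have hJz : fderiv ℝ (fun ζ => J (z ζ)) 0 = K.comp (fderiv ℝ z 0) := by
    have : fderiv ℝ (J ∘ z) 0 = (fderiv ℝ J (z 0)).comp (fderiv ℝ z 0) :=
      fderiv_comp 0 (hJd (z 0)) (hzd 0)
    simpa [Function.comp_def, hz0, ← hK] using this
  have hd1 : DifferentiableAt ℝ (fun ζ => fderiv ℝ z ζ 1) 0 :=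
    (had 0).clm_apply (differentiableAt_const _)
  have hdJz : DifferentiableAt ℝ (fun ζ => J (z ζ)) 0 := (hJd (z 0)).comp 0 (hzd 0)
  -- differentiating the holomorphy relation
  have keyz : ∀ w : ℂ, A2 w Complex.I = J p (A2 w 1) + K (fderiv ℝ z 0 w) t := by
    intro w
    have h1 : fderiv ℝ (fun ζ => fderiv ℝ z ζ Complex.I) 0
        = fderiv ℝ (fun ζ => J (z ζ) (fderiv ℝ z ζ 1)) 0 := hball.fderiv_eq
    have h2 : fderiv ℝ (fun ζ => J (z ζ) (fderiv ℝ z ζ 1)) 0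
        = (J p).comp (fderiv ℝ (fun ζ => fderiv ℝ z ζ 1) 0)
          + (fderiv ℝ (fun ζ => J (z ζ)) 0).flip (fderiv ℝ z 0 1) := by
      rw [fderiv_clm_apply hdJz hd1, hz0]
    have := congrArg (fun (L : ℂ →L[ℝ] E) => L w) (h1.trans h2)
    simp only [ContinuousLinearMap.add_apply, ContinuousLinearMap.comp_apply,
      ContinuousLinearMap.flip_apply, hJz, ht, happ] at this
    simpa [happ] using this
  -- differentiating J² = -1
  have hKid : ∀ w v : E, J p (K w v) + K w (J p v) = 0 := by
    intro w v
    have hu : DifferentiableAt ℝ (fun q => J q v) p :=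
      (hJd p).clm_apply (differentiableAt_const _)
    have hfu : fderiv ℝ (fun q => J q v) p = K.flip v := by
      rw [fderiv_clm_apply (hJd p) (differentiableAt_const v)]
      ext w'; simp [hK]
    have hconst : fderiv ℝ (fun q => J q (J q v)) p = 0 := by
      have : (fun q : E => J q (J q v)) = fun _ => -v := funext fun q => hJ2 q v
      rw [this, fderiv_fun_const]
      rfl
    have h3 := fderiv_clm_apply (x := p) (hJd p) hu
    rw [hconst, hfu] at h3
    have := congrArg (fun (L : E →L[ℝ] E) => L w) h3.symm
    simpa [ContinuousLinearMap.add_apply, ContinuousLinearMap.comp_apply,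
      ContinuousLinearMap.flip_apply] using this
  -- second derivatives of the pullback u = r ∘ z
  have hu' : ∀ ζ, fderiv ℝ (r ∘ z) ζ = (fderiv ℝ r (z ζ)).comp (fderiv ℝ z ζ) :=
    fun ζ => fderiv_comp ζ (hrd (z ζ)) (hzd ζ)
  have hdrz : fderiv ℝ (fun ζ => fderiv ℝ r (z ζ)) 0 = B.comp (fderiv ℝ z 0) := by
    have : fderiv ℝ (fderiv ℝ r ∘ z) 0 = (fderiv ℝ (fderiv ℝ r) (z 0)).comp (fderiv ℝ z 0) :=
      fderiv_comp 0 (hdrd (z 0)) (hzd 0)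
    simpa [Function.comp_def, hz0, ← hB] using this
  have hddrz : DifferentiableAt ℝ (fun ζ => fderiv ℝ r (z ζ)) 0 :=
    (hdrd (z 0)).comp 0 (hzd 0)
  have upull : ∀ v : ℂ, fderiv ℝ (fun ζ => fderiv ℝ (r ∘ z) ζ v) 0 v
      = dr (A2 v v) + B (fderiv ℝ z 0 v) (fderiv ℝ z 0 v) := by
    intro v
    have e1 : (fun ζ => fderiv ℝ (r ∘ z) ζ v) = fun ζ => fderiv ℝ r (z ζ) (fderiv ℝ z ζ v) := by
      funext ζ; rw [hu' ζ]; rfl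
    rw [e1, fderiv_clm_apply hddrz ((had 0).clm_apply (differentiableAt_const v))]
    simp only [ContinuousLinearMap.add_apply, ContinuousLinearMap.comp_apply,
      ContinuousLinearMap.flip_apply, hdrz, hz0, happ, ← hdrp]
  -- the Levi form expanded
  have hΦd : DifferentiableAt ℝ (fun q => (fderiv ℝ r q).comp (J q)) p :=
    (hdrd p).clm_comp (hJd p)
  have levi : ∀ w v : E,
      (fderiv ℝ (fun q => (fderiv ℝ r q).comp (J q)) p w) v = dr (K w v) + B w (J p v) := by
    intro w v
    have e1 : fderiv ℝ (fun q => fderiv ℝ r q (J q v)) p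
        = (fderiv ℝ (fun q => (fderiv ℝ r q).comp (J q)) p).flip v := by
      have e0 : (fun q => fderiv ℝ r q (J q v))
          = fun q => ((fderiv ℝ r q).comp (J q)) v := rfl
      rw [e0, fderiv_clm_apply hΦd (differentiableAt_const v)]
      ext w'; simp
    have e2 : fderiv ℝ (fun q => fderiv ℝ r q (J q v)) p
        = (fderiv ℝ r p).comp (fderiv ℝ (fun q => J q v) p) + B.flip (J p v) := by
      rw [fderiv_clm_apply (hdrd p) ((hJd p).clm_apply (differentiableAt_const v)), ← hB]
    have hfu : fderiv ℝ (fun q => J q v) p = K.flip v := by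
      rw [fderiv_clm_apply (hJd p) (differentiableAt_const v)]
      ext w'; simp [hK]
    have : ((fderiv ℝ (fun q => (fderiv ℝ r q).comp (J q)) p).flip v) w
        = ((fderiv ℝ r p).comp (fderiv ℝ (fun q => J q v) p) + B.flip (J p v)) w := by
      rw [← e1, e2]
    simpa [ContinuousLinearMap.flip_apply, ContinuousLinearMap.add_apply,
      ContinuousLinearMap.comp_apply, hfu, ← hdrp] using this
  -- put everything together
  have hz1 : A2 1 1 + A2 Complex.I Complex.I = J p (K t t) + K (J p t) t := by
    have k1 := keyz 1
    have kI := keyz Complex.I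
    rw [ht] at k1
    rw [hb0, ← hsym, k1] at kI
    rw [kI]
    simp [map_add, hJ2]
    abel
  have hfinal : dr (A2 1 1) + dr (A2 Complex.I Complex.I)
      = dr (K (J p t) t) - dr (K t (J p t)) := by
    have h4 : J p (K t t) = -(K t (J p t)) :=
      eq_neg_of_add_eq_zero_left (hKid t t)
    have : dr (A2 1 1 + A2 Complex.I Complex.I) = dr (J p (K t t) + K (J p t) t) := by
      rw [hz1]
    rw [map_add, map_add, h4, map_neg] at this
    linarith
  rw [upull 1, upull Complex.I, ht, hb0]
  rw [leviForm, levi (J p t) t, levi t (J p t), hJ2]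
  simp only [map_neg]
  linarith
end

section
/- A C² function r on an almost complex manifold (M,J) is plurisubharmonic (i.e., r ∘ z is subharmonic on 𝔻 for every J-holomorphic disc z : 𝔻 → M) if and only if its Levi form is positive semidefinite: L^J_r(p; t) ≥ 0 for all p ∈ M and t ∈ T_p M. -/
/-- A J-holomorphic disc: a smooth map `z : 𝔻 → M` with `dz ∘ J_st = J ∘ dz` on the unit disc. -/
def JHolDisc {E : Type*} [NormedAddCommGroup E] [NormedSpace ℝ E]
    (J : E → (E →L[ℝ] E)) (z : ℂ → E) : Prop :=
  ContDiff ℝ (⊤ : ℕ∞) z ∧ ∀ ζ ∈ Metric.ball (0 : ℂ) 1, ∀ w : ℂ,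
    fderiv ℝ z ζ (Complex.I * w) = J (z ζ) (fderiv ℝ z ζ w)

/-- The Laplacian of a function `u : ℂ → ℝ`. -/
noncomputable def lap (u : ℂ → ℝ) (ζ : ℂ) : ℝ :=
  fderiv ℝ (fun η => fderiv ℝ u η 1) ζ 1
    + fderiv ℝ (fun η => fderiv ℝ u η Complex.I) ζ Complex.I

/- STATEMENT 6: on an almost complex manifold `(M,J)` through every point and tangent direction
of which passes a J-holomorphic disc (Nijenhuis–Woolf), a C² function `r` is plurisubharmonic
(i.e. `r ∘ z` is subharmonic — for C² functions: `Δ(r∘z) ≥ 0` — for every J-holomorphic disc `z`)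
iff its Levi form is positive semidefinite: `L^J_r(p;t) ≥ 0` for all `p`, `t`. -/
lemma key_lap_eq_levi {E : Type*} [NormedAddCommGroup E] [NormedSpace ℝ E]
    (J : E → (E →L[ℝ] E)) (hJs : ContDiff ℝ (⊤ : ℕ∞) J)
    (hJ2 : ∀ q v, J q (J q v) = -v)
    (r : E → ℝ) (hr : ContDiff ℝ 2 r)
    (z : ℂ → E) (hz : JHolDisc J z) (ζ : ℂ) (hζ : ζ ∈ Metric.ball (0 : ℂ) 1) :
    lap (r ∘ z) ζ = leviForm J r (z ζ) (fderiv ℝ z ζ 1) := by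
  obtain ⟨hzs, hzh⟩ := hz
  set φ : E → (E →L[ℝ] ℝ) := fun q => (fderiv ℝ r q).comp (J q) with hφdef
  have hφ : ContDiff ℝ 1 φ :=
    (hr.fderiv_right (by norm_num)).clm_comp (hJs.of_le (by exact_mod_cast le_top))
  have hzd : ∀ η, DifferentiableAt ℝ z η := fun η =>
    (hzs.differentiable (by simp)) η
  have hrd : ∀ q, DifferentiableAt ℝ r q := fun q =>
    (hr.differentiable two_ne_zero) q
  have hz' : ContDiff ℝ (⊤ : ℕ∞) (fderiv ℝ z) := hzs.fderiv_right (by simp)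
  -- chain rule
  have hchain : ∀ η, fderiv ℝ (r ∘ z) η = (fderiv ℝ r (z η)).comp (fderiv ℝ z η) :=
    fun η => fderiv_comp (x := η) (hrd (z η)) (hzd η)
  set p := z ζ with hp
  set t := fderiv ℝ z ζ 1 with ht
  -- holomorphy rewritten
  have hI : ∀ η ∈ Metric.ball (0 : ℂ) 1, fderiv ℝ z η Complex.I = J (z η) (fderiv ℝ z η 1) := by
    intro η hη
    have := hzh η hη 1
    simpa using this
  have hball : Metric.ball (0 : ℂ) 1 ∈ nhds ζ := Metric.isOpen_ball.mem_nhds hζ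
  -- eventual identities
  have hev1 : (fun η => fderiv ℝ (r ∘ z) η 1)
      =ᶠ[nhds ζ] (fun η => -((φ (z η)) (fderiv ℝ z η Complex.I))) := by
    filter_upwards [hball] with η hη
    rw [hchain η]
    have : (φ (z η)) (fderiv ℝ z η Complex.I)
        = fderiv ℝ r (z η) (J (z η) (J (z η) (fderiv ℝ z η 1))) := by
      rw [hI η hη]; rfl
    rw [this, hJ2]
    simp
  have hev2 : (fun η => fderiv ℝ (r ∘ z) η Complex.I)
      =ᶠ[nhds ζ] (fun η => (φ (z η)) (fderiv ℝ z η 1)) := by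
    filter_upwards [hball] with η hη
    rw [hchain η]
    have : (φ (z η)) (fderiv ℝ z η 1) = fderiv ℝ r (z η) (J (z η) (fderiv ℝ z η 1)) := rfl
    rw [this, ← hI η hη]
    rfl
  -- differentiability of the pieces
  have hcz : DifferentiableAt ℝ (fun η => φ (z η)) ζ :=
    ((hφ.differentiable one_ne_zero) (z ζ)).comp ζ (hzd ζ)
  have hdz' : ∀ w : ℂ, DifferentiableAt ℝ (fun η => fderiv ℝ z η w) ζ := fun w =>
    ((hz'.differentiable (by simp)) ζ).clm_apply (differentiableAt_const w)
  -- second derivative of z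
  set Z'' := fderiv ℝ (fderiv ℝ z) ζ with hZ''
  have hZ''dw : ∀ w : ℂ, fderiv ℝ (fun η => fderiv ℝ z η w) ζ = Z''.flip w := by
    intro w
    have := fderiv_clm_apply (c := fderiv ℝ z) (u := fun _ => w)
      ((hz'.differentiable (by simp)) ζ) (differentiableAt_const w)
    simpa using this
  have hsymm : Z'' 1 Complex.I = Z'' Complex.I 1 :=
    second_derivative_symmetric (fun y => (hzd y).hasFDerivAt)
      ((hz'.differentiable (by simp)) ζ).hasFDerivAt 1 Complex.I
  -- derivative of φ ∘ z
  have hcomp : fderiv ℝ (fun η => φ (z η)) ζ = (fderiv ℝ φ p).comp (fderiv ℝ z ζ) :=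
    fderiv_comp (x := ζ) ((hφ.differentiable one_ne_zero) (z ζ)) (hzd ζ)
  -- main two computations
  have hterm : ∀ w : ℂ, fderiv ℝ (fun η => (φ (z η)) (fderiv ℝ z η w)) ζ
      = (φ p).comp (Z''.flip w) + ((fderiv ℝ φ p).comp (fderiv ℝ z ζ)).flip (fderiv ℝ z ζ w) := by
    intro w
    rw [fderiv_clm_apply hcz (hdz' w), hZ''dw, hcomp]
  have hIζ : fderiv ℝ z ζ Complex.I = J p t := hI ζ hζ
  have e1 : fderiv ℝ (fun η => fderiv ℝ (r ∘ z) η 1) ζ 1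
      = -((φ p) (Z'' 1 Complex.I)) - ((fderiv ℝ φ p) t) (J p t) := by
    rw [hev1.fderiv_eq]
    have : fderiv ℝ (fun η => -((φ (z η)) (fderiv ℝ z η Complex.I))) ζ
        = -fderiv ℝ (fun η => (φ (z η)) (fderiv ℝ z η Complex.I)) ζ := fderiv_neg
    rw [this, hterm Complex.I]
    simp [hIζ, ← ht]
    ring
  have e2 : fderiv ℝ (fun η => fderiv ℝ (r ∘ z) η Complex.I) ζ Complex.I
      = (φ p) (Z'' Complex.I 1) + ((fderiv ℝ φ p) (J p t)) t := by
    rw [hev2.fderiv_eq, hterm 1]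
    simp [hIζ, ← ht]
  rw [lap, e1, e2, leviForm, hsymm, ← hφdef]
  ring


theorem stmt6 {E : Type*} [NormedAddCommGroup E] [NormedSpace ℝ E]
    (J : E → (E →L[ℝ] E)) (hJs : ContDiff ℝ (⊤ : ℕ∞) J)
    (hJ2 : ∀ q v, J q (J q v) = -v)
    (hNW : ∀ p : E, ∀ t : E, ∃ z : ℂ → E,
      JHolDisc J z ∧ z 0 = p ∧ fderiv ℝ z 0 1 = t)
    (r : E → ℝ) (hr : ContDiff ℝ 2 r) :
    (∀ z : ℂ → E, JHolDisc J z → ∀ ζ ∈ Metric.ball (0 : ℂ) 1, 0 ≤ lap (r ∘ z) ζ)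
      ↔ ∀ p : E, ∀ t : E, 0 ≤ leviForm J r p t := by
  constructor
  · intro h p t
    obtain ⟨z, hz, hz0, hdz⟩ := hNW p t
    have h0 : (0 : ℂ) ∈ Metric.ball (0 : ℂ) 1 := by norm_num [Metric.mem_ball]
    have := h z hz 0 h0
    rwa [key_lap_eq_levi J hJs hJ2 r hr z hz 0 h0, hz0, hdz] at this
  · intro h z hz ζ hζ
    rw [key_lap_eq_levi J hJs hJ2 r hr z hz ζ hζ]
    exact h _ _
end

section
/- Let Q(z) = A(z) + B(\bar z) + O(|z|²) with A(z) = Σ_k A_k z_k, B(\bar z) = Σ_k B_k \bar z_k (A_k, B_k ∈ M_n(ℂ)), and let Φ(z) = z + Σ_{k,j} φ_{kj} z_k \bar z_j be a quadratic diffeomorphism fixing 0 with identity linear part. If z solves z_{\bar ζ} + Q(z)\bar z_{\bar ζ} = 0 and z' = Φ(z), then z' solves z'_{\bar ζ} + Q'(z')\bar z'_{\bar ζ} = 0 with Q' = (Φ_z Q - Φ_{\bar z})(\bar Φ_{\bar z} - \bar Φ_z Q)^{-1}, and choosing Φ_k = A_k (where Φ_z = Σ_k Φ_k z_k) yields Q'(0)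 = 0 and Q'_{z'}(0) = 0. -/
open Metric

attribute [local instance] Matrix.normedAddCommGroup Matrix.normedSpace

/-- Wirtinger derivative `∂f/∂ζ̄` of `f : ℂ → ℂ^n`. -/
noncomputable def wdbar {n : ℕ} (f : ℂ → (Fin n → ℂ)) (ζ : ℂ) : Fin n → ℂ :=
  (2 : ℂ)⁻¹ • (fderiv ℝ f ζ 1 + Complex.I • fderiv ℝ f ζ Complex.I)

/-- Wirtinger derivative `∂f/∂ζ` of `f : ℂ → ℂ^n`. -/
noncomputable def wd {n : ℕ} (f : ℂ → (Fin n → ℂ)) (ζ : ℂ) : Fin n → ℂ :=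
  (2 : ℂ)⁻¹ • (fderiv ℝ f ζ 1 - Complex.I • fderiv ℝ f ζ Complex.I)

namespace Stmt9Aux
variable {n : ℕ}

/-- `v ↦ M *ᵥ (star v)` as an `ℝ`-linear CLM. -/
noncomputable def mVstarCLM (M : Matrix (Fin n) (Fin n) ℂ) : (Fin n → ℂ) →L[ℝ] (Fin n → ℂ) :=
  LinearMap.toContinuousLinearMap
    { toFun := fun v => M.mulVec (star v)
      map_add' := fun x y => by
        show M.mulVec (star (x + y)) = _
        rw [star_add, Matrix.mulVec_add]
      map_smul' := fun r x => by
        show M.mulVec (star (r • x)) = _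
        simp only [star_smul, star_trivial, Matrix.mulVec_smul, RingHom.id_apply] }

@[simp] lemma mVstarCLM_apply (M : Matrix (Fin n) (Fin n) ℂ) (v : Fin n → ℂ) :
    mVstarCLM M v = M.mulVec (star v) := rfl

/-- matrix multiplication as a bounded bilinear CLM -/
noncomputable def mulCLM :
    Matrix (Fin n) (Fin n) ℂ →L[ℝ] Matrix (Fin n) (Fin n) ℂ →L[ℝ] Matrix (Fin n) (Fin n) ℂ :=
  LinearMap.toContinuousLinearMap
    { toFun := fun X => LinearMap.toContinuousLinearMap (LinearMap.mulLeft ℝ X)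
      map_add' := fun X Y => by
        ext Z i j
        show ((X + Y) * Z) i j = (X * Z) i j + (Y * Z) i j
        rw [add_mul]; rfl
      map_smul' := fun r X => by
        ext Z i j
        show ((r • X) * Z) i j = (r • (X * Z)) i j
        rw [smul_mul_assoc] }

@[simp] lemma mulCLM_apply (X Y : Matrix (Fin n) (Fin n) ℂ) : mulCLM X Y = X * Y := rfl

lemma hasFDerivAt_matmul {f g : (Fin n → ℂ) → Matrix (Fin n) (Fin n) ℂ}
    {f' g' : (Fin n → ℂ) →L[ℝ] Matrix (Fin n) (Fin n) ℂ} {x : Fin n → ℂ}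
    (hf : HasFDerivAt f f' x) (hg : HasFDerivAt g g' x) :
    HasFDerivAt (fun z => f z * g z)
      ((mulCLM (f x)).comp g' + (show (Fin n → ℂ) →L[ℝ] Matrix (Fin n) (Fin n) ℂ from (mulCLM.flip (g x)).comp f')) x := by
  have h := (mulCLM.isBoundedBilinearMap.hasFDerivAt (f x, g x)).comp x (hf.prodMk hg)
  exact h

lemma differentiableAt_det {M : (Fin n → ℂ) → Matrix (Fin n) (Fin n) ℂ} {x : Fin n → ℂ}
    (h : ∀ i j, DifferentiableAt ℝ (fun z => M z i j) x) :
    DifferentiableAt ℝ (fun z => (M z).det) x := by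
  simp only [Matrix.det_apply']
  exact DifferentiableAt.fun_sum fun σ _ =>
    ((HasFDerivAt.finset_prod (fun i _ => (h (σ i) i).hasFDerivAt)).differentiableAt).const_mul _

lemma differentiableAt_adjugate {M : (Fin n → ℂ) → Matrix (Fin n) (Fin n) ℂ} {x : Fin n → ℂ}
    (h : ∀ i j, DifferentiableAt ℝ (fun z => M z i j) x) :
    DifferentiableAt ℝ (fun z => (M z).adjugate) x := by
  refine differentiableAt_pi.mpr ?_
  intro i
  refine differentiableAt_pi.mpr ?_
  intro j
  simp only [Matrix.adjugate_apply]
  refine differentiableAt_det fun a b => ?_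
  by_cases hab : a = j
  · simp only [Matrix.updateRow_apply, hab, if_true]
    exact differentiableAt_const _
  · simp only [Matrix.updateRow_apply, hab, if_false]
    exact h a b

lemma differentiableAt_entry {M : (Fin n → ℂ) → Matrix (Fin n) (Fin n) ℂ} {x : Fin n → ℂ}
    (h : DifferentiableAt ℝ M x) (i j : Fin n) :
    DifferentiableAt ℝ (fun z => M z i j) x :=
  (differentiableAt_pi.mp ((differentiableAt_pi.mp h) i)) j

noncomputable def projC (k : Fin n) : (Fin n → ℂ) →L[ℝ] ℂ := ContinuousLinearMap.proj k
@[simp] lemma projC_apply (k : Fin n) (v : Fin n → ℂ) : projC k v = v k := rfl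

noncomputable def conjCLM : ℂ →L[ℝ] ℂ := Complex.conjCLE.toContinuousLinearMap
@[simp] lemma conjCLM_apply (c : ℂ) : conjCLM c = (starRingEnd ℂ) c := rfl

/-- the derivative of `Φ` at `p` -/
noncomputable def DPhi (A : Fin n → Matrix (Fin n) (Fin n) ℂ) (p : Fin n → ℂ) :
    (Fin n → ℂ) →L[ℝ] (Fin n → ℂ) :=
  ContinuousLinearMap.id ℝ (Fin n → ℂ) +
    ∑ k, (p k • mVstarCLM (A k) + (projC k).smulRight ((A k).mulVec (star p)))

lemma DPhi_apply (A : Fin n → Matrix (Fin n) (Fin n) ℂ) (p h : Fin n → ℂ) :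
    DPhi A p h = h + ∑ k, (p k • ((A k).mulVec (star h)) + h k • ((A k).mulVec (star p))) := by
  simp [DPhi, ContinuousLinearMap.sum_apply]

lemma hasFDerivAt_Phi (A : Fin n → Matrix (Fin n) (Fin n) ℂ) (p : Fin n → ℂ) :
    HasFDerivAt (fun w => w + ∑ k, w k • ((A k).mulVec (star w))) (DPhi A p) p :=
  (hasFDerivAt_id p).add <| HasFDerivAt.fun_sum fun k _ =>
    ((projC k).hasFDerivAt).smul ((mVstarCLM (A k)).hasFDerivAt)

noncomputable def LQ (A B : Fin n → Matrix (Fin n) (Fin n) ℂ) :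
    (Fin n → ℂ) →L[ℝ] Matrix (Fin n) (Fin n) ℂ :=
  ∑ k, ((projC k).smulRight (A k) + (conjCLM.comp (projC k)).smulRight (B k))

lemma LQ_apply (A B : Fin n → Matrix (Fin n) (Fin n) ℂ) (v : Fin n → ℂ) :
    LQ A B v = (∑ k, v k • A k) + ∑ k, (starRingEnd ℂ) (v k) • B k := by
  simp [LQ, ContinuousLinearMap.sum_apply, Finset.sum_add_distrib]

/-- mapping conj entrywise, as CLM -/
noncomputable def mapConjCLM : Matrix (Fin n) (Fin n) ℂ →L[ℝ] Matrix (Fin n) (Fin n) ℂ :=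
  LinearMap.toContinuousLinearMap
    { toFun := fun X => X.map (starRingEnd ℂ)
      map_add' := fun X Y => by
        ext i j; simp [Matrix.map_apply, Matrix.add_apply]
      map_smul' := fun r X => by
        ext i j
        simp [Matrix.map_apply, Matrix.smul_apply, Complex.real_smul, map_mul,
          Complex.conj_ofReal] }

@[simp] lemma mapConjCLM_apply (X : Matrix (Fin n) (Fin n) ℂ) :
    mapConjCLM X = X.map (starRingEnd ℂ) := rfl

noncomputable def PhizbL (A : Fin n → Matrix (Fin n) (Fin n) ℂ) :
    (Fin n → ℂ) →L[ℝ] Matrix (Fin n) (Fin n) ℂ :=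
  ∑ k, (projC k).smulRight (A k)

lemma PhizbL_apply (A : Fin n → Matrix (Fin n) (Fin n) ℂ) (v : Fin n → ℂ) :
    PhizbL A v = ∑ k, v k • A k := by
  simp [PhizbL, ContinuousLinearMap.sum_apply]

noncomputable def PhizL (A : Fin n → Matrix (Fin n) (Fin n) ℂ) :
    (Fin n → ℂ) →L[ℝ] Matrix (Fin n) (Fin n) ℂ :=
  LinearMap.toContinuousLinearMap
    { toFun := fun v => Matrix.of (fun s j => (A j).mulVec (star v) s)
      map_add' := fun x y => by
        ext i j
        simp [Matrix.add_apply, star_add, Matrix.mulVec_add]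
      map_smul' := fun r x => by
        ext i j
        simp [Matrix.smul_apply, star_smul, star_trivial, Matrix.mulVec_smul] }

@[simp] lemma PhizL_apply (A : Fin n → Matrix (Fin n) (Fin n) ℂ) (v : Fin n → ℂ) :
    PhizL A v = Matrix.of (fun s j => (A j).mulVec (star v) s) := rfl

/-- derivative of Q at 0 -/
lemma hasFDerivAt_Q (A B : Fin n → Matrix (Fin n) (Fin n) ℂ)
    (Q : (Fin n → ℂ) → Matrix (Fin n) (Fin n) ℂ) (hQ0 : Q 0 = 0)
    (hQexp : ∃ C : ℝ, ∀ z : Fin n → ℂ,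
      ‖Q z - (∑ k, z k • A k) - (∑ k, (starRingEnd ℂ) (z k) • B k)‖ ≤ C * ‖z‖ ^ 2) :
    HasFDerivAt Q (LQ A B) 0 := by
  obtain ⟨C, hC⟩ := hQexp
  refine hasFDerivAt_iff_isLittleO_nhds_zero.mpr ?_
  have h1 : (fun h : Fin n → ℂ => Q (0 + h) - Q 0 - LQ A B h) =O[nhds 0]
      (fun h : Fin n → ℂ => ‖h‖ ^ 2) := by
    apply Asymptotics.IsBigO.of_bound C
    filter_upwards with h
    rw [zero_add, hQ0, sub_zero, LQ_apply]
    calc ‖Q h - ((∑ k, h k • A k) + ∑ k, (starRingEnd ℂ) (h k) • B k)‖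
        = ‖Q h - (∑ k, h k • A k) - ∑ k, (starRingEnd ℂ) (h k) • B k‖ := by
          rw [sub_add_eq_sub_sub]
      _ ≤ C * ‖h‖ ^ 2 := hC h
      _ ≤ C * ‖(‖h‖ ^ 2)‖ := by
          rw [norm_pow, norm_norm]
  refine h1.trans_isLittleO ?_
  rw [Asymptotics.isLittleO_iff]
  intro c hc
  rw [Metric.eventually_nhds_iff]
  refine ⟨c, hc, fun y hy => ?_⟩
  rw [dist_zero_right] at hy
  have h2 : ‖(‖y‖ ^ 2 : ℝ)‖ = ‖y‖ * ‖y‖ := by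
    rw [Real.norm_of_nonneg (by positivity), pow_two]
  rw [h2]
  exact mul_le_mul_of_nonneg_right hy.le (norm_nonneg y)

lemma star_mulVec' (M : Matrix (Fin n) (Fin n) ℂ) (w : Fin n → ℂ) :
    star (M.mulVec w) = (M.map (starRingEnd ℂ)).mulVec (star w) := by
  ext i
  simp [Matrix.mulVec, dotProduct, Matrix.map_apply, star_sum, star_mul', mul_comm]

lemma one_add_of_mulVec (A : Fin n → Matrix (Fin n) (Fin n) ℂ) (p h : Fin n → ℂ) :
    (1 + Matrix.of (fun s j => (A j).mulVec (star p) s)).mulVec h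
      = h + ∑ k, h k • ((A k).mulVec (star p)) := by
  rw [Matrix.add_mulVec, Matrix.one_mulVec]
  congr 1
  ext s
  simp only [Matrix.mulVec, dotProduct, Matrix.of_apply, Finset.sum_apply,
    Pi.smul_apply, smul_eq_mul]
  exact Finset.sum_congr rfl fun j _ => mul_comm _ _

lemma sum_smul_mulVec (A : Fin n → Matrix (Fin n) (Fin n) ℂ) (p w : Fin n → ℂ) :
    (∑ k, p k • A k).mulVec w = ∑ k, p k • ((A k).mulVec w) := by
  ext s
  simp only [Matrix.mulVec, dotProduct, Finset.sum_apply, Matrix.sum_apply,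
    Matrix.smul_apply, Pi.smul_apply, smul_eq_mul, Finset.sum_mul, Finset.mul_sum]
  rw [Finset.sum_comm]
  exact Finset.sum_congr rfl fun k _ => Finset.sum_congr rfl fun j _ => mul_assoc _ _ _

end Stmt9Aux


/- STATEMENT 9: Let `Q(z) = A(z) + B(z̄) + O(|z|²)` with `A(z) = Σ_k A_k z_k`,
`B(z̄) = Σ_k B_k z̄_k`, and let `Φ(z) = z + Σ_k z_k (A_k z̄)` be the quadratic diffeomorphism with
`Φ_k = A_k`, so that `Φ_z(z) = I + (s,j) ↦ (A_j z̄)_s` and `Φ_{z̄}(z) = Σ_k z_k A_k`.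
If `Q'` satisfies the transformation law
`Q'(Φ(z)) = (Φ_z Q - Φ_{z̄})(Φ̄_{z̄} - Φ̄_z Q)⁻¹` (with `Φ̄_{z̄} = conj Φ_z`, `Φ̄_z = conj Φ_{z̄}`),
then: (1) whenever `z` solves `z_ζ̄ + Q(z) z̄_ζ̄ = 0` on `𝔻`, `z' = Φ∘z` solves
`z'_ζ̄ + Q'(z') z̄'_ζ̄ = 0` on `𝔻`; and (2) `Q'(0) = 0` and `Q'_{z'}(0) = 0`, the latter expressed
as `D_{x_k} Q'(0) = i · D_{y_k} Q'(0)` for every `k` (vanishing of the holomorphic Wirtinger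
derivative). -/
theorem stmt9 {n : ℕ}
    (A B : Fin n → Matrix (Fin n) (Fin n) ℂ)
    (Q : (Fin n → ℂ) → Matrix (Fin n) (Fin n) ℂ)
    (hQ : ContDiff ℝ (⊤ : ℕ∞) Q) (hQ0 : Q 0 = 0)
    (hQexp : ∃ C : ℝ, ∀ z : Fin n → ℂ,
      ‖Q z - (∑ k, z k • A k) - (∑ k, (starRingEnd ℂ) (z k) • B k)‖ ≤ C * ‖z‖ ^ 2)
    (Φ : (Fin n → ℂ) → (Fin n → ℂ))
    (hΦ : ∀ z, Φ z = z + ∑ k, z k • ((A k).mulVec (star z)))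
    (Φz Φzb : (Fin n → ℂ) → Matrix (Fin n) (Fin n) ℂ)
    (hΦz : ∀ z, Φz z = 1 + Matrix.of (fun s j => (A j).mulVec (star z) s))
    (hΦzb : ∀ z, Φzb z = ∑ k, z k • A k)
    (Q' : (Fin n → ℂ) → Matrix (Fin n) (Fin n) ℂ)
    (hQ's : ContDiff ℝ (⊤ : ℕ∞) Q')
    (hinv : ∀ z : Fin n → ℂ,
      IsUnit ((Φz z).map (starRingEnd ℂ) - (Φzb z).map (starRingEnd ℂ) * Q z))
    (hQ'def : ∀ z : Fin n → ℂ,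
      Q' (Φ z) = (Φz z * Q z - Φzb z)
        * ((Φz z).map (starRingEnd ℂ) - (Φzb z).map (starRingEnd ℂ) * Q z)⁻¹) :
    (∀ z : ℂ → (Fin n → ℂ), ContDiff ℝ (⊤ : ℕ∞) z →
      (∀ ζ ∈ ball (0 : ℂ) 1, wdbar z ζ + (Q (z ζ)).mulVec (star (wd z ζ)) = 0) →
      ∀ ζ ∈ ball (0 : ℂ) 1,
        wdbar (fun η => Φ (z η)) ζ
          + (Q' (Φ (z ζ))).mulVec (star (wd (fun η => Φ (z η)) ζ)) = 0)
    ∧ Q' 0 = 0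
    ∧ ∀ k : Fin n,
        fderiv ℝ Q' 0 (Pi.single k 1)
          = Complex.I • fderiv ℝ Q' 0 (Pi.single k Complex.I) := by
  have hΦf : Φ = fun w => w + ∑ k, w k • ((A k).mulVec (star w)) := funext hΦ
  have hΦ0 : Φ 0 = 0 := by rw [hΦ]; simp
  have hΦz0 : Φz 0 = 1 := by
    rw [hΦz]
    have h1 : Matrix.of (fun s j => (A j).mulVec (star (0 : Fin n → ℂ)) s)
        = (0 : Matrix (Fin n) (Fin n) ℂ) := by
      ext s j; simp [Matrix.mulVec_zero]
    rw [h1, add_zero]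
  have hΦzb0 : Φzb 0 = 0 := by rw [hΦzb]; simp
  have hQ'0 : Q' 0 = 0 := by
    have h0 := hQ'def 0
    rw [hΦ0, hQ0, hΦzb0] at h0
    simpa using h0
  refine ⟨?_, hQ'0, ?_⟩
  · -- part 1: the transformed equation
    intro z hz hsol ζ hζ
    have hzd : DifferentiableAt ℝ z ζ := (hz.differentiable (by simp)).differentiableAt
    have hPhiAt : HasFDerivAt Φ (Stmt9Aux.DPhi A (z ζ)) (z ζ) := by
      rw [hΦf]; exact Stmt9Aux.hasFDerivAt_Phi A (z ζ)
    have hcomp : HasFDerivAt (fun η => Φ (z η))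
        ((Stmt9Aux.DPhi A (z ζ)).comp (fderiv ℝ z ζ)) ζ :=
      HasFDerivAt.comp ζ hPhiAt hzd.hasFDerivAt
    have hfd : fderiv ℝ (fun η => Φ (z η)) ζ
        = (Stmt9Aux.DPhi A (z ζ)).comp (fderiv ℝ z ζ) := hcomp.fderiv
    have key : ∀ h : Fin n → ℂ, Stmt9Aux.DPhi A (z ζ) h
        = (Φz (z ζ)).mulVec h + (Φzb (z ζ)).mulVec (star h) := by
      intro h
      rw [Stmt9Aux.DPhi_apply, hΦz, hΦzb, Stmt9Aux.one_add_of_mulVec,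
        Stmt9Aux.sum_smul_mulVec, Finset.sum_add_distrib]
      abel
    have hwb : wdbar (fun η => Φ (z η)) ζ
        = (Φz (z ζ)).mulVec (wdbar z ζ) + (Φzb (z ζ)).mulVec (star (wd z ζ)) := by
      simp only [wdbar, wd, hfd, ContinuousLinearMap.coe_comp', Function.comp_apply, key]
      simp only [star_smul, star_sub, Matrix.mulVec_smul, Matrix.mulVec_add, Matrix.mulVec_sub,
        Complex.star_def, Complex.conj_I, map_inv₀, map_ofNat]
      module
    have hww : wd (fun η => Φ (z η)) ζ
        = (Φz (z ζ)).mulVec (wd z ζ) + (Φzb (z ζ)).mulVec (star (wdbar z ζ)) := by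
      simp only [wdbar, wd, hfd, ContinuousLinearMap.coe_comp', Function.comp_apply, key]
      simp only [star_smul, star_add, Matrix.mulVec_smul, Matrix.mulVec_add, Matrix.mulVec_sub,
        Complex.star_def, Complex.conj_I, map_inv₀, map_ofNat]
      module
    have hzeq : wdbar z ζ = -((Q (z ζ)).mulVec (star (wd z ζ))) :=
      eq_neg_of_add_eq_zero_left (hsol ζ hζ)
    have hstar_wdbar : star (wdbar z ζ)
        = -(((Q (z ζ)).map (starRingEnd ℂ)).mulVec (wd z ζ)) := by
      rw [hzeq, star_neg, Stmt9Aux.star_mulVec', star_star]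
    have hwd2 : wd (fun η => Φ (z η)) ζ
        = ((Φz (z ζ)) - (Φzb (z ζ)) * ((Q (z ζ)).map (starRingEnd ℂ))).mulVec (wd z ζ) := by
      rw [hww, hstar_wdbar, Matrix.mulVec_neg, Matrix.mulVec_mulVec, Matrix.sub_mulVec]
      abel
    have hmap : ((Φz (z ζ)) - (Φzb (z ζ)) * ((Q (z ζ)).map (starRingEnd ℂ))).map (starRingEnd ℂ)
        = (Φz (z ζ)).map (starRingEnd ℂ) - ((Φzb (z ζ)).map (starRingEnd ℂ)) * (Q (z ζ)) := by
      ext i j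
      simp [Matrix.map_apply, Matrix.sub_apply, Matrix.mul_apply, map_sub, map_sum, map_mul,
        Complex.conj_conj]
    have hstar_wdw : star (wd (fun η => Φ (z η)) ζ)
        = ((Φz (z ζ)).map (starRingEnd ℂ)
            - ((Φzb (z ζ)).map (starRingEnd ℂ)) * (Q (z ζ))).mulVec (star (wd z ζ)) := by
      rw [hwd2, Stmt9Aux.star_mulVec', hmap]
    have hdet : IsUnit ((Φz (z ζ)).map (starRingEnd ℂ)
        - ((Φzb (z ζ)).map (starRingEnd ℂ)) * (Q (z ζ))).det :=
      (Matrix.isUnit_iff_isUnit_det _).mp (hinv (z ζ))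
    rw [hwb, hzeq, hstar_wdw, hQ'def (z ζ), Matrix.mulVec_mulVec, mul_assoc,
      Matrix.nonsing_inv_mul _ hdet, mul_one, Matrix.mulVec_neg, Matrix.mulVec_mulVec,
      Matrix.sub_mulVec]
    abel
  · -- part 3: vanishing of the holomorphic derivative at 0
    intro k
    have hQder : HasFDerivAt Q (Stmt9Aux.LQ A B) 0 := Stmt9Aux.hasFDerivAt_Q A B Q hQ0 hQexp
    have hΦzder : HasFDerivAt Φz (Stmt9Aux.PhizL A) 0 := by
      rw [funext hΦz]
      have h := (hasFDerivAt_const (1 : Matrix (Fin n) (Fin n) ℂ) (0 : Fin n → ℂ)).add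
        (Stmt9Aux.PhizL A).hasFDerivAt
      exact h.congr_fderiv (zero_add _)
    have hΦzbder : HasFDerivAt Φzb (Stmt9Aux.PhizbL A) 0 := by
      rw [funext hΦzb]
      exact HasFDerivAt.fun_sum fun j _ => ((Stmt9Aux.projC j).hasFDerivAt).smul_const (A j)
    set G : (Fin n → ℂ) → Matrix (Fin n) (Fin n) ℂ :=
      fun w => (Φz w).map (starRingEnd ℂ) - (Φzb w).map (starRingEnd ℂ) * Q w with hGdef
    set N : (Fin n → ℂ) → Matrix (Fin n) (Fin n) ℂ :=
      fun w => Φz w * Q w - Φzb w with hNdef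
    have hG0 : G 0 = 1 := by
      show (Φz 0).map (starRingEnd ℂ) - (Φzb 0).map (starRingEnd ℂ) * Q 0 = 1
      rw [hΦz0, hΦzb0, hQ0, mul_zero, sub_zero,
        Matrix.map_one (starRingEnd ℂ) (map_zero _) (map_one _)]
    have hN0 : N 0 = 0 := by
      show Φz 0 * Q 0 - Φzb 0 = 0
      rw [hQ0, mul_zero, hΦzb0, sub_zero]
    have hmapz : HasFDerivAt (fun w => (Φz w).map (starRingEnd ℂ))
        (Stmt9Aux.mapConjCLM.comp (Stmt9Aux.PhizL A)) 0 :=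
      (Stmt9Aux.mapConjCLM.hasFDerivAt).comp 0 hΦzder
    have hmapzb : HasFDerivAt (fun w => (Φzb w).map (starRingEnd ℂ))
        (Stmt9Aux.mapConjCLM.comp (Stmt9Aux.PhizbL A)) 0 :=
      (Stmt9Aux.mapConjCLM.hasFDerivAt).comp 0 hΦzbder
    have hGdiff : DifferentiableAt ℝ G 0 :=
      (hmapz.differentiableAt).sub
        (Stmt9Aux.hasFDerivAt_matmul hmapzb hQder).differentiableAt
    have hGent : ∀ i j, DifferentiableAt ℝ (fun w => G w i j) 0 :=
      Stmt9Aux.differentiableAt_entry hGdiff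
    have hdetdiff : DifferentiableAt ℝ (fun w => (G w).det) 0 :=
      Stmt9Aux.differentiableAt_det hGent
    have hadjdiff : DifferentiableAt ℝ (fun w => (G w).adjugate) 0 :=
      Stmt9Aux.differentiableAt_adjugate hGent
    have hdetne : (G 0).det ≠ 0 := by rw [hG0, Matrix.det_one]; exact one_ne_zero
    have hGinvdiff : DifferentiableAt ℝ (fun w => (G w)⁻¹) 0 := by
      simp only [Matrix.inv_def, Ring.inverse_eq_inv']
      exact (hdetdiff.inv hdetne).smul hadjdiff
    have hNder : HasFDerivAt N ((Stmt9Aux.mulCLM (Φz 0)).comp (Stmt9Aux.LQ A B)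
        + (show (Fin n → ℂ) →L[ℝ] Matrix (Fin n) (Fin n) ℂ from (Stmt9Aux.mulCLM.flip (Q 0)).comp (Stmt9Aux.PhizL A)) - Stmt9Aux.PhizbL A) 0 :=
      (Stmt9Aux.hasFDerivAt_matmul hΦzder hQder).sub hΦzbder
    have hFder : HasFDerivAt (fun w => N w * (G w)⁻¹)
        ((Stmt9Aux.mulCLM (N 0)).comp (fderiv ℝ (fun w => (G w)⁻¹) 0)
          + (show (Fin n → ℂ) →L[ℝ] Matrix (Fin n) (Fin n) ℂ from (Stmt9Aux.mulCLM.flip ((G 0)⁻¹)).comp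
              ((Stmt9Aux.mulCLM (Φz 0)).comp (Stmt9Aux.LQ A B)
                + (show (Fin n → ℂ) →L[ℝ] Matrix (Fin n) (Fin n) ℂ from (Stmt9Aux.mulCLM.flip (Q 0)).comp (Stmt9Aux.PhizL A))
                - Stmt9Aux.PhizbL A))) 0 :=
      Stmt9Aux.hasFDerivAt_matmul hNder hGinvdiff.hasFDerivAt
    have hDPhi0 : Stmt9Aux.DPhi A 0 = ContinuousLinearMap.id ℝ (Fin n → ℂ) := by
      ext v
      rw [Stmt9Aux.DPhi_apply]
      simp [Matrix.mulVec_zero]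
    have hPhiAt0 : HasFDerivAt Φ (ContinuousLinearMap.id ℝ (Fin n → ℂ)) 0 := by
      rw [hΦf, ← hDPhi0]; exact Stmt9Aux.hasFDerivAt_Phi A 0
    have hQ'd : DifferentiableAt ℝ Q' 0 := (hQ's.differentiable (by simp)).differentiableAt
    have hQ'at : HasFDerivAt Q' (fderiv ℝ Q' 0) (Φ 0) := by
      rw [hΦ0]; exact hQ'd.hasFDerivAt
    have hchain : HasFDerivAt (fun w => Q' (Φ w))
        ((fderiv ℝ Q' 0).comp (ContinuousLinearMap.id ℝ (Fin n → ℂ))) 0 :=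
      HasFDerivAt.comp 0 hQ'at hPhiAt0
    have hfun : (fun w => Q' (Φ w)) = fun w => N w * (G w)⁻¹ := funext fun w => hQ'def w
    rw [hfun] at hchain
    have huniq := hchain.unique hFder
    rw [ContinuousLinearMap.comp_id] at huniq
    rw [huniq]
    have happ : ∀ v : Fin n → ℂ,
        ((Stmt9Aux.mulCLM (N 0)).comp (fderiv ℝ (fun w => (G w)⁻¹) 0)
          + (show (Fin n → ℂ) →L[ℝ] Matrix (Fin n) (Fin n) ℂ from (Stmt9Aux.mulCLM.flip ((G 0)⁻¹)).comp
              ((Stmt9Aux.mulCLM (Φz 0)).comp (Stmt9Aux.LQ A B)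
                + (show (Fin n → ℂ) →L[ℝ] Matrix (Fin n) (Fin n) ℂ from (Stmt9Aux.mulCLM.flip (Q 0)).comp (Stmt9Aux.PhizL A))
                - Stmt9Aux.PhizbL A))) v
          = ∑ j, (starRingEnd ℂ) (v j) • B j := by
      intro v
      simp only [ContinuousLinearMap.add_apply, ContinuousLinearMap.coe_comp',
        Function.comp_apply, ContinuousLinearMap.flip_apply, Stmt9Aux.mulCLM_apply,
        ContinuousLinearMap.sub_apply]
      show N 0 * fderiv ℝ (fun w => (G w)⁻¹) 0 v + (Φz 0 * Stmt9Aux.LQ A B v + Stmt9Aux.PhizL A v * Q 0 - Stmt9Aux.PhizbL A v) * (G 0)⁻¹ = _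
      rw [hN0, hG0, inv_one, zero_mul, zero_add, hΦz0, hQ0, one_mul, mul_zero, add_zero,
        mul_one, Stmt9Aux.LQ_apply, Stmt9Aux.PhizbL_apply, add_sub_cancel_left]
    rw [happ, happ]
    have h1 : ∑ j, (starRingEnd ℂ) ((Pi.single k 1 : Fin n → ℂ) j) • B j = B k := by
      rw [Finset.sum_eq_single k]
      · simp
      · intro b _ hb
        rw [Pi.single_eq_of_ne hb, map_zero, zero_smul]
      · intro h; exact absurd (Finset.mem_univ k) h
    have h2 : ∑ j, (starRingEnd ℂ) ((Pi.single k Complex.I : Fin n → ℂ) j) • B j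
        = -(Complex.I • B k) := by
      rw [Finset.sum_eq_single k]
      · rw [Pi.single_eq_same, Complex.conj_I, neg_smul]
      · intro b _ hb
        rw [Pi.single_eq_of_ne hb, map_zero, zero_smul]
      · intro h; exact absurd (Finset.mem_univ k) h
    rw [h1, h2, smul_neg, smul_smul, Complex.I_mul_I, neg_smul, neg_neg, one_smul]
end

section
/- Suppose local coordinates near p are normalized so that the J-holomorphy equation is z_{\bar ζ} + Q(z)\bar z_{\bar ζ} = 0 with Q(0) = 0 and Q_z(0) = 0. Then any J-holomorphic disc z with z(0) = 0 and dz(0) = t·(∂/∂ζ) has Taylor expansion z(ζ) = tζ + aζ² + b\bar ζ² + o(|ζ|²); in particular the coefficient of ζ\bar ζ vanishes. -/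
open Metric

attribute [local instance] Matrix.normedAddCommGroup Matrix.normedSpace

/- STATEMENT 10: in normalized coordinates where `Q(0) = 0` and `Q_z(0) = 0` (vanishing of the
holomorphic Wirtinger derivative of `Q` at `0`, expressed as `D_{x_k} Q(0) = i · D_{y_k} Q(0)`),
any C² solution `z` of `z_ζ̄ + Q(z) z̄_ζ̄ = 0` on `𝔻` with `z(0) = 0` and `dz(0) = t·∂/∂ζ` has
Taylor expansion `z(ζ) = tζ + aζ² + b ζ̄² + o(|ζ|²)`: the coefficient `c` of `ζζ̄`, namely the
mixed Wirtinger derivative `∂_ζ ∂_ζ̄ z(0)`, vanishes. -/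
-- mulVec as a real-bilinear continuous map
noncomputable def mvB (n : ℕ) :
    Matrix (Fin n) (Fin n) ℂ →L[ℝ] (Fin n → ℂ) →L[ℝ] (Fin n → ℂ) :=
  LinearMap.toContinuousLinearMap
    { toFun := fun A => LinearMap.toContinuousLinearMap
        { toFun := fun v => A.mulVec v
          map_add' := fun v w => by simp [Matrix.mulVec_add]
          map_smul' := fun r v => by
            funext k
            simp only [Matrix.mulVec, dotProduct, Finset.smul_sum, Pi.smul_apply,
              smul_eq_mul, Complex.real_smul, RingHom.id_apply]
            exact Finset.sum_congr rfl fun j _ => by ring }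
      map_add' := fun A A' => by ext v; simp [Matrix.add_mulVec]
      map_smul' := fun r A => by
        ext v k
        simp only [Matrix.mulVec, dotProduct, Finset.smul_sum, Pi.smul_apply,
          Matrix.smul_apply, smul_eq_mul, Complex.real_smul, RingHom.id_apply,
          LinearMap.coe_mk, AddHom.coe_mk, LinearMap.smul_apply,
          LinearMap.coe_toContinuousLinearMap', ContinuousLinearMap.coe_smul',
          LinearMap.coe_toContinuousLinearMap]
        exact Finset.sum_congr rfl fun j _ => by ring }

@[simp] lemma mvB_apply {n : ℕ} (A : Matrix (Fin n) (Fin n) ℂ) (v : Fin n → ℂ) :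
    mvB n A v = A.mulVec v := rfl

lemma key {n : ℕ} (L : (Fin n → ℂ) →L[ℝ] Matrix (Fin n) (Fin n) ℂ)
    (h : ∀ k : Fin n, L (Pi.single k 1) = Complex.I • L (Pi.single k Complex.I))
    (w : Fin n → ℂ) : L w = Complex.I • L (Complex.I • w) := by
  have hsingle : ∀ (k : Fin n) (c : ℂ),
      L (Pi.single k c) = Complex.I • L (Pi.single k (Complex.I * c)) := by
    intro k c
    have h1 : (Pi.single k c : Fin n → ℂ)
        = c.re • (Pi.single k (1:ℂ) : Fin n → ℂ) + c.im • (Pi.single k Complex.I : Fin n → ℂ) := by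
      rw [← Pi.single_smul, ← Pi.single_smul, ← Pi.single_add]
      simp [Complex.ext_iff]
    have h2 : (Pi.single k (Complex.I * c) : Fin n → ℂ)
        = (-c.im) • (Pi.single k (1:ℂ) : Fin n → ℂ) + c.re • (Pi.single k Complex.I : Fin n → ℂ) := by
      rw [← Pi.single_smul, ← Pi.single_smul, ← Pi.single_add]
      simp [Complex.ext_iff]
    rw [h1, h2]
    simp only [map_add, map_smul, h k, smul_add]
    rw [smul_comm Complex.I (-c.im : ℝ), smul_comm Complex.I (c.re : ℝ),
      smul_smul Complex.I Complex.I, Complex.I_mul_I]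
    module
  have hw : w = ∑ k, Pi.single k (w k) := (Finset.univ_sum_single w).symm
  have hIw : Complex.I • w = ∑ k, Pi.single k (Complex.I * w k) := by
    rw [← Finset.univ_sum_single (Complex.I • w)]
    exact Finset.sum_congr rfl fun k _ => by simp
  calc L w = ∑ k, L (Pi.single k (w k)) := by conv_lhs => rw [hw, map_sum]
    _ = ∑ k, Complex.I • L (Pi.single k (Complex.I * w k)) :=
        Finset.sum_congr rfl fun k _ => hsingle k (w k)
    _ = Complex.I • L (Complex.I • w) := by rw [← Finset.smul_sum, ← map_sum, ← hIw]

theorem stmt10 {n : ℕ}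
    (Q : (Fin n → ℂ) → Matrix (Fin n) (Fin n) ℂ)
    (hQs : ContDiff ℝ (⊤ : ℕ∞) Q) (hQ0 : Q 0 = 0)
    (hQz0 : ∀ k : Fin n,
      fderiv ℝ Q 0 (Pi.single k 1) = Complex.I • fderiv ℝ Q 0 (Pi.single k Complex.I))
    (z : ℂ → (Fin n → ℂ)) (hz : ContDiff ℝ 2 z)
    (hsol : ∀ ζ ∈ ball (0 : ℂ) 1, wdbar z ζ + (Q (z ζ)).mulVec (star (wd z ζ)) = 0)
    (t : Fin n → ℂ) (hz0 : z 0 = 0) (ht : fderiv ℝ z 0 1 = t) :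
    wd (fun η => wdbar z η) 0 = 0 := by
  classical
  have hzd : Differentiable ℝ z := hz.differentiable two_ne_zero
  have hz1 : ContDiff ℝ 1 (fderiv ℝ z) := hz.fderiv_right (le_refl 2)
  have hwd : ContDiff ℝ 1 (wd z) := by
    have h1 : ContDiff ℝ 1 (fun ζ => fderiv ℝ z ζ 1) := hz1.clm_apply contDiff_const
    have h2 : ContDiff ℝ 1 (fun ζ => fderiv ℝ z ζ Complex.I) := hz1.clm_apply contDiff_const
    exact ((h1.sub (h2.const_smul Complex.I)).const_smul ((2:ℂ)⁻¹))
  have hu : DifferentiableAt ℝ (fun ζ => star (wd z ζ)) 0 :=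
    ((hwd.differentiable one_ne_zero) 0).star
  obtain ⟨U, hU⟩ : ∃ U, HasFDerivAt (fun ζ => star (wd z ζ)) U 0 := ⟨_, hu.hasFDerivAt⟩
  set s : Fin n → ℂ := star (wd z 0) with hs
  set L : (Fin n → ℂ) →L[ℝ] Matrix (Fin n) (Fin n) ℂ := fderiv ℝ Q 0 with hL
  set D : ℂ →L[ℝ] (Fin n → ℂ) := fderiv ℝ z 0 with hD
  have hzA : HasFDerivAt z D 0 := (hzd 0).hasFDerivAt
  have hQd : HasFDerivAt Q L (z 0) := by
    rw [hz0]; exact (hQs.differentiable (by simp) 0).hasFDerivAt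
  have hQz : HasFDerivAt (fun ζ => Q (z ζ)) (L.comp D) 0 := hQd.comp 0 hzA
  have hg : HasFDerivAt (fun ζ => (Q (z ζ)).mulVec (star (wd z ζ)))
      ((mvB n).precompR ℂ (Q (z 0)) U + (mvB n).precompL ℂ (L.comp D) (star (wd z 0))) 0 :=
    (mvB n).hasFDerivAt_of_bilinear hQz hU
  have hev : wdbar z =ᶠ[nhds (0:ℂ)]
      (fun ζ => -(Q (z ζ)).mulVec (star (wd z ζ))) := by
    filter_upwards [Metric.ball_mem_nhds (0:ℂ) one_pos] with ζ hζ
    exact eq_neg_of_add_eq_zero_left (hsol ζ hζ)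
  have hF : fderiv ℝ (wdbar z) 0
      = -((mvB n).precompR ℂ (Q (z 0)) U + (mvB n).precompL ℂ (L.comp D) (star (wd z 0))) := by
    rw [hev.fderiv_eq]
    exact hg.neg.fderiv
  have hQz00 : Q (z 0) = 0 := by rw [hz0, hQ0]
  -- value of G at v
  have hGv : ∀ v : ℂ, fderiv ℝ (wdbar z) 0 v = -((L (D v)).mulVec s) := by
    intro v
    rw [hF]
    simp [ContinuousLinearMap.precompR, ContinuousLinearMap.precompL, hQz00,
      Matrix.zero_mulVec]
    rfl
  -- wdbar z 0 = 0
  have h0 : wdbar z 0 = 0 := by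
    have := hsol 0 (mem_ball_self one_pos)
    rw [hz0, hQ0, Matrix.zero_mulVec, add_zero] at this
    exact this
  have hD1 : D 1 = t := ht
  have hDI : D Complex.I = Complex.I • t := by
    have h2 : D 1 + Complex.I • D Complex.I = 0 := by
      have := h0
      rw [wdbar] at this
      have h2ne : ((2:ℂ)⁻¹ : ℂ) ≠ 0 := by norm_num
      exact (smul_eq_zero.mp this).resolve_left h2ne
    have : Complex.I • D Complex.I = -t := by
      rw [hD1] at h2; linear_combination (norm := module) h2
    have h3 := congrArg (fun x => Complex.I • x) this
    simp only [smul_smul, Complex.I_mul_I, neg_one_smul, smul_neg] at h3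
    exact neg_injective h3
  have hLt : L t = Complex.I • L (Complex.I • t) := key L hQz0 t
  -- final computation
  show (2 : ℂ)⁻¹ • (fderiv ℝ (wdbar z) 0 1
      - Complex.I • fderiv ℝ (wdbar z) 0 Complex.I) = 0
  rw [hGv 1, hGv Complex.I, hD1, hDI, hLt, Matrix.smul_mulVec]
  module
end
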